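/- arXiv:1203.4682 — 4 statements merged into one kernel-verified Lean document; each statement's English description precedes it below -/
import Mathlib

section
/- Let L be a Riemannian P-tensor on (V, P, g). Then for all x, y, z, w ∈ V one has L(x, Py, Pz, w) = L(x, y, z, w) and L(Px, Py, z, w) = L(x, y, z, w). -/
open scoped RealInnerProductSpace

/-
Proof idea: a curvature-like tensor has pair symmetry `L(x,y,z,w) = L(z,w,x,y)`, so the
invariance of `L` under `P` in its last pair passes to its first pair. For the middle pair, since
`P² = id` the invariance lets one move a single `P` from the fourth slot to the third; hence
`(x,y,z,w) ↦ L(x,y,z,Pw)` is again curvature-like, and its pair symmetry moves `P` across the middle.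
-/

structure IsCurvatureLike_s0 {V : Type*} (f : V → V → V → V → ℝ) : Prop where
  antisymm_left : ∀ x y z w, f x y z w = -f y x z w
  antisymm_right : ∀ x y z w, f x y z w = -f x y w z
  bianchi : ∀ x y z w, f x y z w + f y z x w + f z x y w = 0

namespace IsCurvatureLike_s0

variable {V : Type*} {f : V → V → V → V → ℝ}

lemma swap_swap (hf : IsCurvatureLike_s0 f) (x y z w : V) : f x y z w = f y x w z := by
  rw [hf.antisymm_left, hf.antisymm_right, neg_neg]

lemma pair_symm (hf : IsCurvatureLike_s0 f) (a b c d : V) : f a b c d = f c d a b := by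
  -- Summing the Bianchi identities for the four cyclic shifts of `(b, c, a, d)`, the
  -- antisymmetries cancel all terms but `2 f a b c d + 2 f d c a b`.
  linarith [hf.bianchi b c a d, hf.bianchi c a d b, hf.bianchi a d b c, hf.bianchi d b c a,
    hf.antisymm_right b c a d, hf.antisymm_right c a d b, hf.antisymm_right a d b c,
    hf.antisymm_right d b c a, hf.swap_swap a b c d, hf.swap_swap c d b a,
    hf.antisymm_left c d a b]

variable {P : V → V}

lemma apply_apply_left (hf : IsCurvatureLike_s0 f) (hfP : ∀ x y z w, f x y (P z) (P w) = f x y z w)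
    (x y z w : V) : f (P x) (P y) z w = f x y z w := by
  rw [hf.pair_symm, hfP, hf.pair_symm]

lemma apply_right_eq_apply_left (hP : Function.Involutive P)
    (hfP : ∀ x y z w, f x y (P z) (P w) = f x y z w) (x y z w : V) :
    f x y z (P w) = f x y (P z) w := by
  simpa only [hP z] using hfP x y (P z) w

lemma comp_apply_right (hf : IsCurvatureLike_s0 f) (hP : Function.Involutive P)
    (hfP : ∀ x y z w, f x y (P z) (P w) = f x y z w) :
    IsCurvatureLike_s0 fun x y z w => f x y z (P w) where
  antisymm_left x y z w := hf.antisymm_left x y z (P w)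
  antisymm_right x y z w := by
    simp only [apply_right_eq_apply_left hP hfP, hf.antisymm_right x y (P z)]
  bianchi x y z w := hf.bianchi x y z (P w)

lemma apply_apply_middle (hf : IsCurvatureLike_s0 f) (hP : Function.Involutive P)
    (hfP : ∀ x y z w, f x y (P z) (P w) = f x y z w) (x y z w : V) :
    f x (P y) (P z) w = f x y z w := by
  have h := (hf.comp_apply_right hP hfP).pair_symm x (P y) z w
  simp only [hP y] at h
  rw [← apply_right_eq_apply_left hP hfP, h, hf.pair_symm]

end IsCurvatureLike_s0

theorem riemannian_P_tensor_prop_3_12_general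
    {V : Type*} [NormedAddCommGroup V] [InnerProductSpace ℝ V]
    (P : V →ₗ[ℝ] V)
    (hP2 : ∀ x : V, P (P x) = x)
    (L : V →ₗ[ℝ] V →ₗ[ℝ] V →ₗ[ℝ] V →ₗ[ℝ] ℝ)
    (hA1 : ∀ x y z w : V, L x y z w = - L y x z w)
    (hA2 : ∀ x y z w : V, L x y z w = - L x y w z)
    (hBianchi : ∀ x y z w : V, L x y z w + L y z x w + L z x y w = 0)
    (hRP : ∀ x y z w : V, L x y (P z) (P w) = L x y z w) :
    ∀ x y z w : V,
      L x (P y) (P z) w = L x y z w ∧ L (P x) (P y) z w = L x y z w := by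
  have hL : IsCurvatureLike_s0 fun x y z w => L x y z w := ⟨hA1, hA2, hBianchi⟩
  intro x y z w
  exact ⟨hL.apply_apply_middle hP2 hRP x y z w, hL.apply_apply_left hRP x y z w⟩

/-- Let L be a Riemannian P-tensor on (V, P, g). Then for all
x, y, z, w ∈ V one has L(x, Py, Pz, w) = L(x, y, z, w) and
L(Px, Py, z, w) = L(x, y, z, w). -/
theorem riemannian_P_tensor_prop_3_12
    {V : Type*} [NormedAddCommGroup V] [InnerProductSpace ℝ V]
    [FiniteDimensional ℝ V]
    (P : V →ₗ[ℝ] V)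
    (hP2 : ∀ x : V, P (P x) = x)
    (hPg : ∀ x y : V, ⟪P x, P y⟫ = ⟪x, y⟫)
    (L : V →ₗ[ℝ] V →ₗ[ℝ] V →ₗ[ℝ] V →ₗ[ℝ] ℝ)
    (hA1 : ∀ x y z w : V, L x y z w = - L y x z w)
    (hA2 : ∀ x y z w : V, L x y z w = - L x y w z)
    (hBianchi : ∀ x y z w : V, L x y z w + L y z x w + L z x y w = 0)
    (hRP : ∀ x y z w : V, L x y (P z) (P w) = L x y z w) :
    ∀ x y z w : V,
      L x (P y) (P z) w = L x y z w ∧ L (P x) (P y) z w = L x y z w :=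
  riemannian_P_tensor_prop_3_12_general P hP2 L hA1 hA2 hBianchi hRP
end

section
/- Let L be a Riemannian P-tensor on (V, P, g). Then for all x, y, z, w ∈ V one has L(Px, y, z, w) = L(x, Py, z, w) = L(x, y, Pz, w) = L(x, y, z, Pw). -/
open scoped RealInnerProductSpace

structure IsCurvatureLike_s1 {V : Type*} (f : V → V → V → V → ℝ) : Prop where
  antisymm_left : ∀ x y z w, f x y z w = - f y x z w
  antisymm_right : ∀ x y z w, f x y z w = - f x y w z
  bianchi : ∀ x y z w, f x y z w + f y z x w + f z x y w = 0

namespace IsCurvatureLike_s1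

variable {V : Type*} {f : V → V → V → V → ℝ}

/-- The classical argument: add the Bianchi identities for the four cyclic shifts of `(x, y, z, w)`
and use the antisymmetries. -/
theorem pair_symm_s1 (hf : IsCurvatureLike_s1 f) (x y z w : V) : f x y z w = f z w x y := by
  have := hf.bianchi x y z w
  have := hf.bianchi y z w x
  have := hf.bianchi z w x y
  have := hf.bianchi w x y z
  have := hf.antisymm_right y z w x
  have := hf.antisymm_right z w y x
  have := hf.antisymm_right w y z x
  have := hf.antisymm_left w y x z
  have := hf.antisymm_right w x z y
  have := hf.antisymm_right x z w y
  have := hf.antisymm_left x z y w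
  have := hf.antisymm_right x y w z
  have := hf.antisymm_left y w x z
  linarith

variable {P : V → V}

theorem apply_third_eq_apply_fourth (hP : Function.Involutive P)
    (hfP : ∀ x y z w, f x y (P z) (P w) = f x y z w) (x y z w : V) :
    f x y (P z) w = f x y z (P w) := by
  simpa only [hP w] using hfP x y z (P w)

theorem apply_first_eq_apply_second (hf : IsCurvatureLike_s1 f) (hP : Function.Involutive P)
    (hfP : ∀ x y z w, f x y (P z) (P w) = f x y z w) (x y z w : V) :
    f (P x) y z w = f x (P y) z w :=
  calc f (P x) y z w = f z w (P x) y := hf.pair_symm_s1 _ _ _ _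
    _ = f z w x (P y) := apply_third_eq_apply_fourth hP hfP z w x y
    _ = f x (P y) z w := (hf.pair_symm_s1 _ _ _ _).symm

theorem comp_third (hf : IsCurvatureLike_s1 f) (hP : Function.Involutive P)
    (hfP : ∀ x y z w, f x y (P z) (P w) = f x y z w) :
    IsCurvatureLike_s1 (fun x y z w => f x y (P z) w) where
  antisymm_left x y z w := hf.antisymm_left x y (P z) w
  antisymm_right x y z w := by
    simpa only [apply_third_eq_apply_fourth hP hfP x y w z] using hf.antisymm_right x y (P z) w
  bianchi x y z w := by
    simpa only [apply_third_eq_apply_fourth hP hfP] using hf.bianchi x y z (P w)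

/-- Pair symmetry of `f (·, ·, P ·, ·)` moves `P` across the two pairs. -/
theorem apply_second_eq_apply_third (hf : IsCurvatureLike_s1 f) (hP : Function.Involutive P)
    (hfP : ∀ x y z w, f x y (P z) (P w) = f x y z w) (x y z w : V) :
    f x (P y) z w = f x y (P z) w :=
  calc f x (P y) z w = f z w x (P y) := hf.pair_symm_s1 _ _ _ _
    _ = f z w (P x) y := (apply_third_eq_apply_fourth hP hfP z w x y).symm
    _ = f x y (P z) w := (hf.comp_third hP hfP).pair_symm_s1 z w x y

end IsCurvatureLike_s1

theorem riemannian_P_tensor_prop_3_13_general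
    {V : Type*} [NormedAddCommGroup V] [InnerProductSpace ℝ V]
    (P : V →ₗ[ℝ] V)
    (hP2 : ∀ x : V, P (P x) = x)
    (L : V →ₗ[ℝ] V →ₗ[ℝ] V →ₗ[ℝ] V →ₗ[ℝ] ℝ)
    (hA1 : ∀ x y z w : V, L x y z w = - L y x z w)
    (hA2 : ∀ x y z w : V, L x y z w = - L x y w z)
    (hBianchi : ∀ x y z w : V, L x y z w + L y z x w + L z x y w = 0)
    (hRP : ∀ x y z w : V, L x y (P z) (P w) = L x y z w) :
    ∀ x y z w : V,
      L (P x) y z w = L x (P y) z w ∧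
      L x (P y) z w = L x y (P z) w ∧
      L x y (P z) w = L x y z (P w) := by
  have hL : IsCurvatureLike_s1 fun x y z w => L x y z w := ⟨hA1, hA2, hBianchi⟩
  intro x y z w
  exact ⟨hL.apply_first_eq_apply_second hP2 hRP x y z w,
    hL.apply_second_eq_apply_third hP2 hRP x y z w,
    IsCurvatureLike_s1.apply_third_eq_apply_fourth (f := fun x y z w => L x y z w) hP2 hRP x y z w⟩

/-- Let L be a Riemannian P-tensor on (V, P, g). Then for all
x, y, z, w ∈ V one has L(Px, y, z, w) = L(x, Py, z, w) = L(x, y, Pz, w)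
= L(x, y, z, Pw). -/
theorem riemannian_P_tensor_prop_3_13
    {V : Type*} [NormedAddCommGroup V] [InnerProductSpace ℝ V]
    [FiniteDimensional ℝ V]
    (P : V →ₗ[ℝ] V)
    (hP2 : ∀ x : V, P (P x) = x)
    (hPg : ∀ x y : V, ⟪P x, P y⟫ = ⟪x, y⟫)
    (L : V →ₗ[ℝ] V →ₗ[ℝ] V →ₗ[ℝ] V →ₗ[ℝ] ℝ)
    (hA1 : ∀ x y z w : V, L x y z w = - L y x z w)
    (hA2 : ∀ x y z w : V, L x y z w = - L x y w z)
    (hBianchi : ∀ x y z w : V, L x y z w + L y z x w + L z x y w = 0)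
    (hRP : ∀ x y z w : V, L x y (P z) (P w) = L x y z w) :
    ∀ x y z w : V,
      L (P x) y z w = L x (P y) z w ∧
      L x (P y) z w = L x y (P z) w ∧
      L x y (P z) w = L x y z (P w) :=
  riemannian_P_tensor_prop_3_13_general P hP2 L hA1 hA2 hBianchi hRP
end

section
/- On (V, P, g), the tensor π₃ = ψ₁(g̃), where g̃(x,y) = g(x,Py), is a Riemannian P-tensor. -/
open scoped RealInnerProductSpace

open scoped RealInnerProductSpace

variable {V : Type*} [NormedAddCommGroup V] [InnerProductSpace ℝ V]
  [FiniteDimensional ℝ V]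

/-- The tensor ψ₁(S) built from a (0,2)-tensor S and the metric g. -/
noncomputable def psi1 (S : V → V → ℝ) (x y z w : V) : ℝ :=
  ⟪y, z⟫ * S x w - ⟪x, z⟫ * S y w + S y z * ⟪x, w⟫ - S x z * ⟪y, w⟫

/-- The tensor ψ₂(S)(x,y,z,w) = ψ₁(S)(x,y,Pz,Pw). -/
noncomputable def psi2 (P : V →ₗ[ℝ] V) (S : V → V → ℝ) (x y z w : V) : ℝ :=
  psi1 S x y (P z) (P w)

/-- A (0,4)-tensor is curvature-like if it is antisymmetric in the first and
last pairs of arguments and satisfies the first Bianchi identity. -/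
def IsCurvatureLike (L : V → V → V → V → ℝ) : Prop :=
  (∀ x y z w : V, L x y z w = - L y x z w) ∧
  (∀ x y z w : V, L x y z w = - L x y w z) ∧
  (∀ x y z w : V, L x y z w + L y z x w + L z x y w = 0)

/-- π₁ = (1/2)ψ₁(g). -/
noncomputable def pi1 (x y z w : V) : ℝ :=
  (1 / 2 : ℝ) * psi1 (fun a b : V => ⟪a, b⟫) x y z w

/-- π₂ = (1/2)ψ₂(g). -/
noncomputable def pi2 (P : V →ₗ[ℝ] V) (x y z w : V) : ℝ :=
  (1 / 2 : ℝ) * psi2 P (fun a b : V => ⟪a, b⟫) x y z w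

/-- π₃ = ψ₁(g̃), where g̃(x,y) = g(x,Py). -/
noncomputable def pi3 (P : V →ₗ[ℝ] V) (x y z w : V) : ℝ :=
  psi1 (fun a b : V => ⟪a, P b⟫) x y z w


/-- A Riemannian P-tensor is a curvature-like tensor L satisfying in addition
L(x,y,Pz,Pw) = L(x,y,z,w). -/
def IsRiemannianPTensor (P : V →ₗ[ℝ] V) (L : V → V → V → V → ℝ) : Prop :=
  IsCurvatureLike L ∧ ∀ x y z w : V, L x y (P z) (P w) = L x y z w

section

omit [FiniteDimensional ℝ V]

theorem LinearMap.isSymmetric_of_involutive_of_isometry (P : V →ₗ[ℝ] V)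
    (hP2 : ∀ x : V, P (P x) = x) (hPg : ∀ x y : V, ⟪P x, P y⟫ = ⟪x, y⟫) :
    P.IsSymmetric := fun x y => by
  rw [← hPg x (P y), hP2]

section psi1

variable (S : V → V → ℝ)

theorem psi1_antisymm_left (x y z w : V) : psi1 S x y z w = - psi1 S y x z w := by
  simp only [psi1]; ring

theorem psi1_antisymm_right (x y z w : V) : psi1 S x y z w = - psi1 S x y w z := by
  simp only [psi1]; ring

variable {S}

theorem psi1_bianchi (hS : ∀ a b, S a b = S b a) (x y z w : V) :
    psi1 S x y z w + psi1 S y z x w + psi1 S z x y w = 0 := by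
  simp only [psi1]
  rw [real_inner_comm x y, real_inner_comm x z, real_inner_comm y z, hS x y, hS x z, hS y z]
  ring

theorem isCurvatureLike_psi1 (hS : ∀ a b, S a b = S b a) : IsCurvatureLike (psi1 S) :=
  ⟨psi1_antisymm_left S, psi1_antisymm_right S, psi1_bianchi hS⟩

end psi1

/-- Since `g̃(a, Pb) = g(a, b)` when `P² = id`, replacing `(z, w)` by `(Pz, Pw)` only permutes
the four terms of `ψ₁(g̃)`. -/
theorem pi3_apply_P_apply_P {P : V →ₗ[ℝ] V} (hP2 : ∀ x : V, P (P x) = x) (x y z w : V) :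
    pi3 P x y (P z) (P w) = pi3 P x y z w := by
  simp only [pi3, psi1, hP2]; ring

end

/-- On (V, P, g), the tensor π₃ = ψ₁(g̃), where g̃(x,y) = g(x,Py),
is a Riemannian P-tensor. -/
theorem pi3_riemannianPTensor
    (P : V →ₗ[ℝ] V)
    (hP2 : ∀ x : V, P (P x) = x)
    (hPg : ∀ x y : V, ⟪P x, P y⟫ = ⟪x, y⟫) :
    IsRiemannianPTensor P (pi3 P) := by
  have hP : P.IsSymmetric := P.isSymmetric_of_involutive_of_isometry hP2 hPg
  refine ⟨isCurvatureLike_psi1 fun a b => ?_, pi3_apply_P_apply_P hP2⟩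
  rw [← hP, real_inner_comm]
end

section
/- Let (V, P, g) be 4-dimensional with tr P = 0, and let L be a Riemannian P-tensor on V. If x, y ∈ V are orthonormal vectors spanning a totally real 2-plane, i.e. g(x, Px) = g(x, Py) = g(y, Px) = g(y, Py) = 0, then the sectional curvature of this 2-plane with respect to L equals L(x, y, x, y) = −τ(L)/8. In particular all totally real 2-planes have the same sectional curvature with respect to L. -/
open scoped RealInnerProductSpace
open Module

variable {V : Type*} [NormedAddCommGroup V] [InnerProductSpace ℝ V]
  [FiniteDimensional ℝ V]

/-- The Ricci tensor ρ(L)(y,z) = Σᵢ L(eᵢ, y, z, eᵢ) of a (0,4)-tensor L,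
computed in an orthonormal basis. -/
noncomputable def ricci (L : V →ₗ[ℝ] V →ₗ[ℝ] V →ₗ[ℝ] V →ₗ[ℝ] ℝ) (y z : V) : ℝ :=
  ∑ i, L (stdOrthonormalBasis ℝ V i) y z (stdOrthonormalBasis ℝ V i)

/-- The scalar curvature τ(L) = Σⱼ ρ(L)(eⱼ, eⱼ). -/
noncomputable def scalarCurv (L : V →ₗ[ℝ] V →ₗ[ℝ] V →ₗ[ℝ] V →ₗ[ℝ] ℝ) : ℝ :=
  ∑ j, ricci L (stdOrthonormalBasis ℝ V j) (stdOrthonormalBasis ℝ V j)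

/-!
If `x, y` are orthonormal and span a totally real plane, then `x, y, Px, Py` is an orthonormal
basis of `V`, and the scalar curvature can be computed in it. Writing `K(a, b) = L(a, b, a, b)`,
the P-invariance and the Bianchi identity give `K(a, Pb) = K(a, b)` and `K(a, Pa) = 0`, so the
twelve off-diagonal terms of `τ = -Σ K(eᵢ, eⱼ)` are eight copies of `K(x, y)` and four zeros.
-/

open InnerProductSpace

theorem OrthonormalBasis.sum_apply_apply_eq {ι κ M : Type*} [Fintype ι] [Fintype κ]
    [AddCommGroup M] [Module ℝ M] (B : V →ₗ[ℝ] V →ₗ[ℝ] M)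
    (e : OrthonormalBasis ι ℝ V) (f : OrthonormalBasis κ ℝ V) :
    ∑ i, B (e i) (e i) = ∑ j, B (f j) (f j) := by
  -- both sides are `B` evaluated on the canonical tensor `∑ eᵢ ⊗ eᵢ`, which is basis-independent
  have hB := congrArg (TensorProduct.lift B) (canonicalCovariantTensor_eq_sum V e)
  rw [canonicalCovariantTensor_eq_sum V f] at hB
  simpa using hB.symm

theorem ricci_eq_sum_orthonormalBasis {ι : Type*} [Fintype ι]
    (L : V →ₗ[ℝ] V →ₗ[ℝ] V →ₗ[ℝ] V →ₗ[ℝ] ℝ) (e : OrthonormalBasis ι ℝ V) (y z : V) :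
    ricci L y z = ∑ i, L (e i) y z (e i) :=
  (stdOrthonormalBasis ℝ V).sum_apply_apply_eq ((L.flip y).flip z) e

theorem scalarCurv_eq_sum_orthonormalBasis {ι : Type*} [Fintype ι]
    (L : V →ₗ[ℝ] V →ₗ[ℝ] V →ₗ[ℝ] V →ₗ[ℝ] ℝ) (e : OrthonormalBasis ι ℝ V) :
    scalarCurv L = ∑ i, ∑ j, L (e i) (e j) (e j) (e i) := by
  simp only [scalarCurv, ricci_eq_sum_orthonormalBasis L e]
  rw [Finset.sum_comm]
  exact Finset.sum_congr rfl fun i _ =>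
    (stdOrthonormalBasis ℝ V).sum_apply_apply_eq ((L (e i)).compr₂ (LinearMap.applyₗ (e i))) e

section CurvatureLike

variable {W : Type*} [AddCommGroup W] [Module ℝ W]

def adaptedFrame (P : W →ₗ[ℝ] W) (x y : W) : Fin 4 → W := ![x, y, P x, P y]

structure IsCurvatureLike_s14 (L : W →ₗ[ℝ] W →ₗ[ℝ] W →ₗ[ℝ] W →ₗ[ℝ] ℝ) : Prop where
  antisymm_left : ∀ x y z w, L x y z w = - L y x z w
  antisymm_right : ∀ x y z w, L x y z w = - L x y w z
  bianchi : ∀ x y z w, L x y z w + L y z x w + L z x y w = 0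

namespace IsCurvatureLike_s14

variable {L : W →ₗ[ℝ] W →ₗ[ℝ] W →ₗ[ℝ] W →ₗ[ℝ] ℝ}

theorem apply_self_left (hL : IsCurvatureLike_s14 L) (u z w : W) : L u u z w = 0 := by
  linarith [hL.antisymm_left u u z w]

theorem apply_swap_swap (hL : IsCurvatureLike_s14 L) (x y z w : W) : L y x w z = L x y z w := by
  rw [hL.antisymm_left y x, hL.antisymm_right x y w z, neg_neg]

theorem apply_comm_pair (hL : IsCurvatureLike_s14 L) (x y z w : W) : L x y z w = L z w x y := by
  linarith [hL.bianchi y z x w, hL.bianchi z x w y, hL.bianchi x w y z, hL.bianchi w y z x,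
    hL.antisymm_right z x y w, hL.antisymm_right x w y z, hL.antisymm_left w z x y,
    hL.antisymm_right w y z x, hL.antisymm_left y x w z, hL.antisymm_right x y z w,
    hL.antisymm_right y z x w, hL.antisymm_right z w x y]

variable {P : W →ₗ[ℝ] W}

theorem apply_self_P (hL : IsCurvatureLike_s14 L) (hP2 : ∀ x, P (P x) = x)
    (hRP : ∀ x y z w, L x y (P z) (P w) = L x y z w) (z w u : W) : L z w u (P u) = 0 := by
  have h := hRP z w u (P u)
  rw [hP2, hL.antisymm_right z w (P u)] at h
  linarith

theorem apply_P_P_left (hL : IsCurvatureLike_s14 L)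
    (hRP : ∀ x y z w, L x y (P z) (P w) = L x y z w) (u v z w : W) :
    L (P u) (P v) z w = L u v z w := by
  rw [hL.apply_comm_pair, hRP, hL.apply_comm_pair]

theorem apply_P_right_self (hL : IsCurvatureLike_s14 L) (hP2 : ∀ x, P (P x) = x)
    (hRP : ∀ x y z w, L x y (P z) (P w) = L x y z w) (u v : W) :
    L u (P v) u (P v) = L u v u v := by
  have h := hL.bianchi v u (P u) (P v)
  have hPP := hL.apply_P_P_left hRP u (P v) u (P v)
  rw [hP2] at hPP
  rw [hRP, hL.apply_self_P hP2 hRP, hPP] at h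
  linarith [hL.antisymm_left v u u v]

theorem apply_P_left_self (hL : IsCurvatureLike_s14 L) (hP2 : ∀ x, P (P x) = x)
    (hRP : ∀ x y z w, L x y (P z) (P w) = L x y z w) (u v : W) :
    L (P u) v (P u) v = L u v u v := by
  rw [← hL.apply_swap_swap, hL.apply_P_right_self hP2 hRP, hL.apply_swap_swap]

theorem sum_apply_adaptedFrame (hL : IsCurvatureLike_s14 L) (hP2 : ∀ x, P (P x) = x)
    (hRP : ∀ x y z w, L x y (P z) (P w) = L x y z w) (x y : W) :
    ∑ i, ∑ j, L (adaptedFrame P x y i) (adaptedFrame P x y j) (adaptedFrame P x y i)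
      (adaptedFrame P x y j) = 8 * L x y x y := by
  simp only [Fin.sum_univ_four, adaptedFrame, Matrix.cons_val_zero, Matrix.cons_val_one,
    Matrix.cons_val_two, Matrix.cons_val_three, Matrix.head_cons, Matrix.tail_cons,
    hL.apply_self_left, hL.apply_P_left_self hP2 hRP, hL.apply_P_right_self hP2 hRP]
  linarith [hL.apply_swap_swap x y x y]

end IsCurvatureLike_s14

end CurvatureLike

theorem IsCurvatureLike_s14.scalarCurv_eq_neg_sum {L : V →ₗ[ℝ] V →ₗ[ℝ] V →ₗ[ℝ] V →ₗ[ℝ] ℝ}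
    (hL : IsCurvatureLike_s14 L) {ι : Type*} [Fintype ι] (e : OrthonormalBasis ι ℝ V) :
    scalarCurv L = - ∑ i, ∑ j, L (e i) (e j) (e i) (e j) := by
  simp only [scalarCurv_eq_sum_orthonormalBasis L e, ← Finset.sum_neg_distrib,
    ← hL.antisymm_right]

theorem orthonormal_adaptedFrame {W : Type*} [NormedAddCommGroup W] [InnerProductSpace ℝ W]
    {P : W →ₗ[ℝ] W} (hPg : ∀ x y, ⟪P x, P y⟫ = ⟪x, y⟫) {x y : W}
    (hx : ⟪x, x⟫ = 1) (hy : ⟪y, y⟫ = 1) (hxy : ⟪x, y⟫ = 0)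
    (hxPx : ⟪x, P x⟫ = 0) (hxPy : ⟪x, P y⟫ = 0) (hyPx : ⟪y, P x⟫ = 0) (hyPy : ⟪y, P y⟫ = 0) :
    Orthonormal ℝ (adaptedFrame P x y) := by
  rw [orthonormal_iff_ite]
  have hyx : ⟪y, x⟫ = 0 := by rwa [real_inner_comm]
  have hPxx : ⟪P x, x⟫ = 0 := by rwa [real_inner_comm]
  have hPxy : ⟪P x, y⟫ = 0 := by rwa [real_inner_comm]
  have hPyx : ⟪P y, x⟫ = 0 := by rwa [real_inner_comm]
  have hPyy : ⟪P y, y⟫ = 0 := by rwa [real_inner_comm]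
  intro i j
  fin_cases i <;> fin_cases j <;>
    simp only [adaptedFrame, Fin.reduceFinMk, Matrix.cons_val, hPg, hx, hy, hxy, hyx, hxPx, hxPy,
      hyPx, hyPy, hPxx, hPxy, hPyx, hPyy] <;> simp

theorem riemannian_P_tensor_totally_real_sectional_curvature_general
    (hdim : finrank ℝ V = 4)
    (P : V →ₗ[ℝ] V)
    (hP2 : ∀ x : V, P (P x) = x)
    (hPg : ∀ x y : V, ⟪P x, P y⟫ = ⟪x, y⟫)
    (L : V →ₗ[ℝ] V →ₗ[ℝ] V →ₗ[ℝ] V →ₗ[ℝ] ℝ)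
    (hA1 : ∀ x y z w : V, L x y z w = - L y x z w)
    (hA2 : ∀ x y z w : V, L x y z w = - L x y w z)
    (hBianchi : ∀ x y z w : V, L x y z w + L y z x w + L z x y w = 0)
    (hRP : ∀ x y z w : V, L x y (P z) (P w) = L x y z w) :
    ∀ x y : V, ⟪x, x⟫ = 1 → ⟪y, y⟫ = 1 → ⟪x, y⟫ = 0 →
      ⟪x, P x⟫ = 0 → ⟪x, P y⟫ = 0 → ⟪y, P x⟫ = 0 → ⟪y, P y⟫ = 0 →
      L x y x y = - scalarCurv L / 8 := by
  intro x y hx hy hxy hxPx hxPy hyPx hyPy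
  have hL : IsCurvatureLike_s14 L := ⟨hA1, hA2, hBianchi⟩
  have hon := orthonormal_adaptedFrame hPg hx hy hxy hxPx hxPy hyPx hyPy
  let e : OrthonormalBasis (Fin 4) ℝ V := .mk hon
    (hon.linearIndependent.span_eq_top_of_card_eq_finrank' (by simp [hdim])).ge
  have hτ := hL.scalarCurv_eq_neg_sum e
  rw [OrthonormalBasis.coe_mk, hL.sum_apply_adaptedFrame hP2 hRP] at hτ
  linarith

/-- Let (V, P, g) be 4-dimensional with tr P = 0, and let L be a
Riemannian P-tensor on V. If x, y ∈ V are orthonormal vectors spanning a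
totally real 2-plane, i.e. g(x,Px) = g(x,Py) = g(y,Px) = g(y,Py) = 0, then the
sectional curvature of this 2-plane with respect to L equals
L(x,y,x,y) = −τ(L)/8. In particular all totally real 2-planes have the same
sectional curvature with respect to L. -/
theorem riemannian_P_tensor_totally_real_sectional_curvature
    (hdim : finrank ℝ V = 4)
    (P : V →ₗ[ℝ] V)
    (hP2 : ∀ x : V, P (P x) = x)
    (hPg : ∀ x y : V, ⟪P x, P y⟫ = ⟪x, y⟫)
    (htr : LinearMap.trace ℝ V P = 0)
    (L : V →ₗ[ℝ] V →ₗ[ℝ] V →ₗ[ℝ] V →ₗ[ℝ] ℝ)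
    (hA1 : ∀ x y z w : V, L x y z w = - L y x z w)
    (hA2 : ∀ x y z w : V, L x y z w = - L x y w z)
    (hBianchi : ∀ x y z w : V, L x y z w + L y z x w + L z x y w = 0)
    (hRP : ∀ x y z w : V, L x y (P z) (P w) = L x y z w) :
    ∀ x y : V, ⟪x, x⟫ = 1 → ⟪y, y⟫ = 1 → ⟪x, y⟫ = 0 →
      ⟪x, P x⟫ = 0 → ⟪x, P y⟫ = 0 → ⟪y, P x⟫ = 0 → ⟪y, P y⟫ = 0 →
      L x y x y = - scalarCurv L / 8 :=
  riemannian_P_tensor_totally_real_sectional_curvature_general hdim P hP2 hPg L hA1 hA2 hBianchi hRP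
end
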